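/- Let H = (V, μ) be an m-isolated k-hypergraph of dimension d with m < k, and let S be a family of k-hypergraphs of dimension d that is simple for {H}. Then there is a hypergraph G ∈ Σ_ℤ(Eqs(S)) such that H + G is pre (m+1)-isolated. Moreover, if |V| > 2k − 1, then V supports G for the family S. -/

import Mathlib

/-- A hypergraph (of dimension `d`) over the data domain `ℕ`, represented by its
weight function: a finitely supported function from finite sets of data values
(potential hyperedges) to weight vectors in `ℤ^d`.  Isolated vertices are
irrelevant (hypergraphs are identified up to isolated vertices). -/
abbrev HG (d : ℕ) := (Finset ℕ) →₀ (Fin d → ℤ)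

/-- `H` is a `k`-hypergraph: every hyperedge (set with nonzero weight) has `k` elements. -/
def IsHG (k : ℕ) {d : ℕ} (H : HG d) : Prop := ∀ e ∈ H.support, e.card = k

/-- The (non-isolated) vertices of `H`: the union of its hyperedges. -/
def verts {d : ℕ} (H : HG d) : Finset ℕ := H.support.sup id

/-- The weight `w_X(H)` of a finite set `X`: the sum of the weights of all
hyperedges of `H` that contain `X`. -/
def weight {d : ℕ} (X : Finset ℕ) (H : HG d) : Fin d → ℤ :=
  ∑ e ∈ H.support.filter (fun e => X ⊆ e), H e
/-- Two hypergraphs are equivalent if (after discarding isolated vertices) they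
differ by a permutation of the data domain. -/
def HGEquiv {d : ℕ} (H₁ H₂ : HG d) : Prop :=
  ∃ π : ℕ ≃ ℕ, ∀ e : Finset ℕ, H₂ (e.image π) = H₁ e

/-- All hypergraphs equivalent to a member of the family `𝒢`. -/
def Eqs {d : ℕ} (𝒢 : Set (HG d)) : Set (HG d) := {H | ∃ G ∈ 𝒢, HGEquiv G H}

/-- `Σ_ℤ(𝒢)`: all finite `ℤ`-linear combinations of members of `𝒢`. -/
def Zsum {d : ℕ} (𝒢 : Set (HG d)) : Set (HG d) :=
  {H | ∃ (l : ℕ) (c : Fin l → ℤ) (F : Fin l → HG d),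
      (∀ i, F i ∈ 𝒢) ∧ H = ∑ i, c i • F i}
/-- `H` is `m`-isolated: `w_X(H) = 0` for every set `X` of vertices of `H`
with `|X| ≤ m`. -/
def IsIsolated {d : ℕ} (m : ℕ) (H : HG d) : Prop :=
  ∀ X : Finset ℕ, X ⊆ verts H → X.card ≤ m → weight X H = 0
/-- `H` is pre `m`-isolated: `H` is `(m−1)`-isolated, and there is a set `X`
of vertices of `H` with `|X| ≤ 2m−1` such that `w_Y(H) = 0` for every
`m`-element set `Y` of vertices not contained in `X`. -/
def PreIsolated {d : ℕ} (m : ℕ) (H : HG d) : Prop :=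
  IsIsolated (m - 1) H ∧
  ∃ X : Finset ℕ, X ⊆ verts H ∧ X.card ≤ 2 * m - 1 ∧
    ∀ Y : Finset ℕ, Y ⊆ verts H → Y.card = m → ¬ Y ⊆ X → weight Y H = 0
/-- `G` is an `(m, a)`-simple `k`-hypergraph:
its vertex set is (contained in) a disjoint union `A ∪ B ∪ C` with
`A = {α₁, …, α_m}`, `B = {β₁, …, β_m}` and `|C| = 2(k−m) − 1`
(`C = ∅` when `m = k`), such that
`w_X(G) = (−1)^{|B ∩ X|} · a` for every `X = {x₁, …, x_m}` with
`x_i ∈ {α_i, β_i}` for each `i`, `w_X(G) = 0` for every other `m`-element set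
`X` of vertices, and `w_X(G) = 0` for every set `X` of vertices with
`|X| < m`. -/
def IsSimple {d : ℕ} (k m : ℕ) (a : Fin d → ℤ) (G : HG d) : Prop :=
  ∃ (A B C : Finset ℕ) (α β : Fin m → ℕ),
    Function.Injective α ∧ Function.Injective β ∧
    A = Finset.image α Finset.univ ∧ B = Finset.image β Finset.univ ∧
    Disjoint A B ∧ Disjoint A C ∧ Disjoint B C ∧
    C.card = 2 * (k - m) - 1 ∧
    verts G ⊆ A ∪ B ∪ C ∧
    (∀ χ : Fin m → Bool,
      weight (Finset.image (fun i => if χ i then β i else α i) Finset.univ) G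
        = ((-1 : ℤ) ^ (Finset.univ.filter (fun i => χ i = true)).card) • a) ∧
    (∀ X : Finset ℕ, X ⊆ A ∪ B ∪ C → X.card = m →
        (∀ χ : Fin m → Bool,
          X ≠ Finset.image (fun i => if χ i then β i else α i) Finset.univ) →
        weight X G = 0) ∧
    (∀ X : Finset ℕ, X ⊆ A ∪ B ∪ C → X.card < m → weight X G = 0)

/-- `S` is a simplification of the family `𝒢`: for every `0 ≤ m ≤ k` and every
vector `g` in the `ℤ`-span of the weights of `m`-element sets of vertices of
members of `𝒢`, the family `S` contains an `(m, g)`-simple `k`-hypergraph. -/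
def IsSimplificationOf {d : ℕ} (k : ℕ) (S 𝒢 : Set (HG d)) : Prop :=
  ∀ m : ℕ, m ≤ k →
    ∀ g ∈ Submodule.span ℤ
      {w : Fin d → ℤ | ∃ G ∈ 𝒢, ∃ X : Finset ℕ,
        X ⊆ verts G ∧ X.card = m ∧ w = weight X G},
      ∃ G' ∈ S, IsSimple k m g G'

/-- `S` is self-simplified: `S` is a simplification of `S` itself. -/
def SelfSimplified {d : ℕ} (k : ℕ) (S : Set (HG d)) : Prop :=
  IsSimplificationOf k S S

/-- `S` is simple for `𝒢`: `S` is self-simplified and a simplification of `𝒢`. -/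
def SimpleFor {d : ℕ} (k : ℕ) (S 𝒢 : Set (HG d)) : Prop :=
  SelfSimplified k S ∧ IsSimplificationOf k S 𝒢
/-- A set `V` of data values supports a hypergraph `H` for the family `𝓗` if
`H = Σᵢ aᵢ · Hᵢ` for some integers `aᵢ` and hypergraphs `Hᵢ ∈ Eqs(𝓗)` whose
vertex sets are all contained in `V`. -/
def Supports {d : ℕ} (V : Finset ℕ) (H : HG d) (𝓗 : Set (HG d)) : Prop :=
  ∃ (l : ℕ) (c : Fin l → ℤ) (F : Fin l → HG d),
    (∀ i, F i ∈ Eqs 𝓗) ∧ (∀ i, verts (F i) ⊆ V) ∧ H = ∑ i, c i • F i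

/-!
Enlarge `V` to a set `W` of at least `2k` points (taking `W = V` when `|V| ≥ 2k`). As `H` is
`k`-uniform and `m`-isolated, `∑_{v ∈ W \ Z} w_{Z ∪ {v}}(H) = (k - m) • w_Z(H) = 0` for every
`m`-set `Z`, so the level-`(m + 1)` weights of `H` form an element of the Specht module of shape
`(|W| - m - 1, m + 1)` with coefficients in the span `M` of these weights. That module is spanned by
polytabloids, and since `S` is simple for `{H}`, every polytabloid with a coefficient in `M` is the
weight function (up to level `m + 1`) of a copy of a member of `S` with all vertices in `W`.
Subtracting the corresponding combination from `H` kills every weight of size at most `m + 1`, so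
`H + G` is even `(m + 1)`-isolated.
-/

open Finset Function

section Operators

variable {α : Type*} [DecidableEq α] {N : Type*} [AddCommMonoid N]

def sumInsert (T : Finset α) (f : Finset α → N) (Z : Finset α) : N :=
  ∑ v ∈ T \ Z, f (insert v Z)

def sumErase (f : Finset α → N) (Y : Finset α) : N :=
  ∑ x ∈ Y, f (Y.erase x)

lemma sumInsert_add (T : Finset α) (f g : Finset α → N)
    (Z : Finset α) : sumInsert T (f + g) Z = sumInsert T f Z + sumInsert T g Z :=
  sum_add_distrib

lemma sumInsert_smul {R : Type*} [Monoid R] [DistribMulAction R N] (T : Finset α) (c : R)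
    (f : Finset α → N) (Z : Finset α) : sumInsert T (c • f) Z = c • sumInsert T f Z :=
  (smul_sum ..).symm

lemma sumErase_insert (f : Finset α → N) {v : α} {Y : Finset α} (hv : v ∉ Y) :
    sumErase f (insert v Y) = f Y + ∑ x ∈ Y, f (insert v (Y.erase x)) := by
  rw [sumErase, sum_insert hv, erase_insert hv]
  exact congrArg _ <| sum_congr rfl fun x hx => by
    rw [erase_insert_of_ne (ne_of_mem_of_not_mem hx hv).symm]

lemma sumInsert_erase (T : Finset α) (f : Finset α → N) {x : α} {Y : Finset α} (hY : Y ⊆ T)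
    (hx : x ∈ Y) : sumInsert T f (Y.erase x) = f Y + ∑ v ∈ T \ Y, f (insert v (Y.erase x)) := by
  rw [sumInsert, sdiff_erase (hY hx), sum_insert (fun h => (mem_sdiff.mp h).2 hx), insert_erase hx]

lemma sumInsert_sumErase_add (T : Finset α) (f : Finset α → N) {Y : Finset α} (hY : Y ⊆ T) :
    sumInsert T (sumErase f) Y + Y.card • f Y =
      (T \ Y).card • f Y + sumErase (sumInsert T f) Y := by
  rw [sumInsert, sum_congr rfl fun v hv => sumErase_insert f (mem_sdiff.mp hv).2, sum_add_distrib,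
    sumErase, sum_congr rfl fun x hx => sumInsert_erase T f hY hx, sum_add_distrib, sum_const,
    sum_const, sum_comm]
  abel

lemma sum_sumErase_mul {R : Type*} [CommSemiring R] (T : Finset α) (r : ℕ) (f g : Finset α → R) :
    ∑ Z ∈ T.powersetCard (r + 1), sumErase f Z * g Z =
      ∑ Y ∈ T.powersetCard r, f Y * sumInsert T g Y := by
  simp only [sumErase, sumInsert, sum_mul, mul_sum]
  rw [sum_sigma', sum_sigma']
  refine sum_nbij' (fun p => ⟨p.1.erase p.2, p.2⟩) (fun p => ⟨insert p.2 p.1, p.2⟩) ?_ ?_ ?_ ?_ ?_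
  · rintro ⟨Z, x⟩ hp
    simp only [mem_sigma, mem_powersetCard] at hp ⊢
    refine ⟨⟨(erase_subset _ _).trans hp.1.1, by rw [card_erase_of_mem hp.2, hp.1.2]; rfl⟩, ?_⟩
    exact mem_sdiff.mpr ⟨hp.1.1 hp.2, notMem_erase _ _⟩
  · rintro ⟨Y, v⟩ hp
    simp only [mem_sigma, mem_powersetCard, mem_sdiff] at hp ⊢
    exact ⟨⟨insert_subset hp.2.1 hp.1.1, by rw [card_insert_of_notMem hp.2.2, hp.1.2]⟩,
      mem_insert_self _ _⟩
  · rintro ⟨Z, x⟩ hp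
    simp only [mem_sigma] at hp
    simp [insert_erase hp.2]
  · rintro ⟨Y, v⟩ hp
    simp only [mem_sigma, mem_sdiff] at hp
    simp [erase_insert hp.2.2]
  · rintro ⟨Z, x⟩ hp
    simp only [mem_sigma] at hp
    simp [insert_erase hp.2]

/-- `sumErase` is adjoint to `sumInsert T`, and the commutation relation turns `‖sumErase f‖²`
into `(|T| - 2r) ‖f‖²`, which is negative unless `f = 0`. -/
theorem eq_zero_of_sumInsert_eq_zero {R : Type*} [CommRing R] [LinearOrder R]
    [IsStrictOrderedRing R] {r : ℕ} {T : Finset α} (hT : T.card < 2 * r) {f : Finset α → R}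
    (hsupp : ∀ Y, ¬(Y ⊆ T ∧ Y.card = r) → f Y = 0)
    (hclosed : ∀ Z : Finset α, Z.card + 1 = r → sumInsert T f Z = 0) : f = 0 := by
  have hrel : ∀ Y ∈ T.powersetCard r,
      sumInsert T (sumErase f) Y = ((T.card : R) - 2 * r) * f Y := by
    intro Y hY
    rw [mem_powersetCard] at hY
    have h := sumInsert_sumErase_add T f hY.1
    have h0 : sumErase (sumInsert T f) Y = 0 := sum_eq_zero fun x hx => hclosed _ <| by
      have := card_pos.mpr ⟨x, hx⟩
      rw [card_erase_of_mem hx]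
      omega
    rw [h0, add_zero, card_sdiff_of_subset hY.1, nsmul_eq_mul, nsmul_eq_mul, hY.2,
      Nat.cast_sub (hY.2 ▸ card_le_card hY.1)] at h
    linear_combination h
  have hneg : (T.card : R) - 2 * r < 0 := by
    rw [sub_neg]; exact_mod_cast hT
  have hsq : 0 ≤ ((T.card : R) - 2 * r) * ∑ Y ∈ T.powersetCard r, f Y * f Y :=
    calc 0 ≤ ∑ Z ∈ T.powersetCard (r + 1), sumErase f Z * sumErase f Z :=
          sum_nonneg fun _ _ => mul_self_nonneg _
      _ = ∑ Y ∈ T.powersetCard r, f Y * sumInsert T (sumErase f) Y := sum_sumErase_mul T r f _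
      _ = _ := by
          rw [mul_sum]
          exact sum_congr rfl fun Y hY => by rw [hrel Y hY]; ring
  have hzero : ∑ Y ∈ T.powersetCard r, f Y * f Y = 0 :=
    le_antisymm (nonpos_of_mul_nonneg_right hsq hneg) (sum_nonneg fun Y _ => mul_self_nonneg _)
  funext Y
  by_cases hY : Y ∈ T.powersetCard r
  · exact mul_self_eq_zero.mp
      ((sum_eq_zero_iff_of_nonneg fun _ _ => mul_self_nonneg _).mp hzero Y hY)
  · exact hsupp Y (by rwa [mem_powersetCard] at hY)

end Operators

section Polytabloid

variable {α : Type*} {r : ℕ}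

lemma choice_eq_choice_iff {a b : Fin r → α} (hab : Injective (Sum.elim a b))
    {χ χ' : Fin r → Bool} {i j : Fin r} :
    (if χ i then b i else a i) = (if χ' j then b j else a j) ↔ i = j ∧ χ i = χ' j := by
  obtain ⟨ha, hb, hne⟩ := Sum.elim_injective.mp hab
  cases χ i <;> cases χ' j <;> simp [ha.eq_iff, hb.eq_iff, hne, fun i j => (hne j i).symm]

lemma injective_sumElim_cons {a b : Fin r → α} (hab : Injective (Sum.elim a b)) {t s : α}
    (ht : ∀ i, t ≠ a i ∧ t ≠ b i) (hs : ∀ i, s ≠ a i ∧ s ≠ b i) (hts : t ≠ s) :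
    Injective (Sum.elim (Fin.cons t a : Fin (r + 1) → α) (Fin.cons s b)) := by
  obtain ⟨ha, hb, hne⟩ := Sum.elim_injective.mp hab
  refine Sum.elim_injective.mpr ⟨Fin.cons_injective_iff.mpr ⟨?_, ha⟩,
    Fin.cons_injective_iff.mpr ⟨?_, hb⟩, fun i j => ?_⟩
  · rintro ⟨i, hi⟩; exact (ht i).1 hi.symm
  · rintro ⟨i, hi⟩; exact (hs i).2 hi.symm
  · cases i using Fin.cases <;> cases j using Fin.cases <;>
      simp [hts, (ht _).2, Ne.symm (hs _).1, hne]

variable [DecidableEq α]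

def mixedSet (a b : Fin r → α) (χ : Fin r → Bool) : Finset α :=
  Finset.image (fun i => if χ i then b i else a i) Finset.univ

def choiceSign (χ : Fin r → Bool) : ℤ :=
  (-1 : ℤ) ^ (Finset.univ.filter (fun i => χ i = true)).card

/-- The polytabloid of the two-row tableau with columns `{a i, b i}`; on `r`-sets `Y` it equals
`∏ i, ([a i ∈ Y] - [b i ∈ Y])`. -/
def polytabloid (a b : Fin r → α) (Y : Finset α) : ℤ :=
  ∑ χ, if Y = mixedSet a b χ then choiceSign χ else 0

lemma choiceSign_eq_prod (χ : Fin r → Bool) :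
    choiceSign χ = ∏ i, if χ i then (-1 : ℤ) else 1 := by
  rw [choiceSign, prod_ite, prod_const, prod_const_one, mul_one]

lemma choiceSign_update_not (χ : Fin r → Bool) (i : Fin r) :
    choiceSign (update χ i (!χ i)) = -choiceSign χ := by
  rw [choiceSign_eq_prod, choiceSign_eq_prod, Fintype.prod_eq_mul_prod_compl i,
    Fintype.prod_eq_mul_prod_compl i, update_self,
    prod_congr rfl fun j hj => by rw [update_of_ne (by simpa using hj)]]
  cases χ i <;> simp

lemma choiceSign_cons_false (χ : Fin r → Bool) :
    choiceSign (Fin.cons false χ : Fin (r + 1) → Bool) = choiceSign χ := by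
  simp [choiceSign_eq_prod, Fin.prod_univ_succ]

lemma mixedSet_image {β : Type*} [DecidableEq β] {f : α → β} (a b : Fin r → α) (χ : Fin r → Bool) :
    (mixedSet a b χ).image f = mixedSet (f ∘ a) (f ∘ b) χ := by
  rw [mixedSet, mixedSet, image_image]
  exact image_congr fun i _ => by by_cases h : χ i <;> simp [h]

lemma polytabloid_image {β : Type*} [DecidableEq β] {f : α → β} (hf : Injective f)
    (a b : Fin r → α) (Y : Finset α) :
    polytabloid (f ∘ a) (f ∘ b) (Y.image f) = polytabloid a b Y := by
  simp only [polytabloid, ← mixedSet_image, image_injective hf |>.eq_iff]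

lemma mixedSet_cons (a b : Fin r → α) (t c : α) (b₀ : Bool) (χ : Fin r → Bool) :
    mixedSet (Fin.cons t a) (Fin.cons c b) (Fin.cons b₀ χ) =
      insert (if b₀ then c else t) (mixedSet a b χ) := by
  ext x
  simp only [mixedSet, mem_image, mem_univ, true_and, Fin.exists_fin_succ, Fin.cons_zero,
    Fin.cons_succ, mem_insert]
  exact or_congr eq_comm Iff.rfl

variable {a b : Fin r → α}

lemma mixedSet_subset {T : Finset α} (h : ∀ i, a i ∈ T ∧ b i ∈ T)
    (χ : Fin r → Bool) : mixedSet a b χ ⊆ T := by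
  intro x hx
  obtain ⟨i, -, rfl⟩ := mem_image.mp hx
  split_ifs
  exacts [(h i).2, (h i).1]

lemma notMem_mixedSet {t : α} (ht : ∀ i, t ≠ a i ∧ t ≠ b i)
    (χ : Fin r → Bool) : t ∉ mixedSet a b χ := by
  rw [mixedSet, mem_image]
  rintro ⟨i, -, hi⟩
  split_ifs at hi
  exacts [(ht i).2 hi.symm, (ht i).1 hi.symm]

lemma exists_eq_mixedSet_of_polytabloid_ne_zero {Y : Finset α}
    (h : polytabloid a b Y ≠ 0) : ∃ χ, Y = mixedSet a b χ := by
  obtain ⟨χ, -, hχ⟩ := exists_ne_zero_of_sum_ne_zero h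
  exact ⟨χ, by_contra fun hY => hχ (if_neg hY)⟩

lemma card_mixedSet (hab : Injective (Sum.elim a b)) (χ : Fin r → Bool) :
    (mixedSet a b χ).card = r := by
  rw [mixedSet, card_image_of_injective, card_univ, Fintype.card_fin]
  intro i j h
  exact ((choice_eq_choice_iff hab).mp h).1

lemma mixedSet_injective (hab : Injective (Sum.elim a b)) : Injective (mixedSet a b) := by
  intro χ χ' h
  funext i
  have hi : (if χ i then b i else a i) ∈ mixedSet a b χ' :=
    h ▸ mem_image_of_mem _ (mem_univ i)
  obtain ⟨j, -, hj⟩ := mem_image.mp hi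
  obtain ⟨rfl, hχ⟩ := (choice_eq_choice_iff hab).mp hj
  exact hχ.symm

lemma polytabloid_mixedSet (hab : Injective (Sum.elim a b)) (χ : Fin r → Bool) :
    polytabloid a b (mixedSet a b χ) = choiceSign χ := by
  rw [polytabloid, sum_eq_single χ
    (fun χ' _ h => if_neg fun h' => h (mixedSet_injective hab h').symm) (by simp), if_pos rfl]

lemma exists_notMem_pair_of_card_lt (hab : Injective (Sum.elim a b)) {Z : Finset α}
    (hZ : Z.card < r) : ∃ i, a i ∉ Z ∧ b i ∉ Z := by
  by_contra! h
  have hsub : mixedSet a b (fun i => decide (a i ∉ Z)) ⊆ Z := by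
    intro x hx
    obtain ⟨i, -, rfl⟩ := mem_image.mp hx
    by_cases hi : a i ∈ Z <;> simp [hi, h i]
  have := card_le_card hsub
  rw [card_mixedSet hab] at this
  omega

lemma mixedSet_update_not (hab : Injective (Sum.elim a b)) (χ : Fin r → Bool) (i : Fin r) :
    mixedSet a b (update χ i (!χ i)) = (mixedSet a b χ).image (Equiv.swap (a i) (b i)) := by
  rw [mixedSet_image]
  refine image_congr fun j _ => ?_
  by_cases hj : j = i
  · subst hj
    cases χ j <;> simp
  · obtain ⟨ha, hb, hne⟩ := Sum.elim_injective.mp hab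
    simp only [update_of_ne hj, comp_apply]
    rw [Equiv.swap_apply_of_ne_of_ne (ha.ne hj) (hne j i),
      Equiv.swap_apply_of_ne_of_ne (fun h => hne i j h.symm) (hb.ne hj)]

lemma polytabloid_swap (hab : Injective (Sum.elim a b)) (i : Fin r) (Y : Finset α) :
    polytabloid a b (Y.image (Equiv.swap (a i) (b i))) = -polytabloid a b Y := by
  have hflip : Involutive fun χ : Fin r → Bool => update χ i (!χ i) := fun χ => by
    simp
  rw [polytabloid, ← Equiv.sum_comp (hflip.toPerm _), polytabloid, ← sum_neg_distrib]
  refine sum_congr rfl fun χ _ => ?_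
  simp only [Involutive.coe_toPerm, mixedSet_update_not hab, choiceSign_update_not,
    (image_injective (Equiv.injective _)).eq_iff]
  split_ifs <;> simp

lemma polytabloid_cons {t c : α} (ht : ∀ i, t ≠ a i ∧ t ≠ b i) (htc : t ≠ c) {Y : Finset α}
    (htY : t ∈ Y) : polytabloid (Fin.cons t a) (Fin.cons c b) Y = polytabloid a b (Y.erase t) := by
  rw [polytabloid, ← Equiv.sum_comp (Fin.consEquiv fun _ => Bool), Fintype.sum_prod_type,
    Fintype.sum_bool, polytabloid]
  have hnot : ∀ χ, t ∉ mixedSet a b χ := notMem_mixedSet ht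
  rw [sum_eq_zero fun χ _ => if_neg ?_, zero_add]
  · refine sum_congr rfl fun χ _ => ?_
    simp only [Fin.consEquiv, Equiv.coe_fn_mk, mixedSet_cons, choiceSign_cons_false,
      Bool.false_eq_true, if_false]
    refine if_congr ⟨?_, ?_⟩ rfl rfl
    · rintro rfl
      exact erase_insert (hnot χ)
    · intro h
      rw [← h, insert_erase htY]
  · simp only [Fin.consEquiv, Equiv.coe_fn_mk, mixedSet_cons, if_true]
    rintro rfl
    exact (mem_insert.mp htY).elim htc (hnot χ)

/-- The polytabloid is antisymmetric under the swap of column `i`, and a set `Z` of size `r - 1`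
misses some column entirely; pairing `v` with its swap makes the sum cancel. -/
lemma sumInsert_polytabloid (hab : Injective (Sum.elim a b)) {T Z : Finset α}
    (hT : ∀ i, a i ∈ T ∧ b i ∈ T) (hZ : Z.card + 1 = r) :
    sumInsert T (polytabloid a b) Z = 0 := by
  unfold sumInsert
  obtain ⟨i, hai, hbi⟩ := exists_notMem_pair_of_card_lt hab (Z := Z) (by omega)
  set σ := Equiv.swap (a i) (b i)
  have hσZ : ∀ z ∈ Z, σ z = z := fun z hz =>
    Equiv.swap_apply_of_ne_of_ne (fun h => hai (h ▸ hz)) (fun h => hbi (h ▸ hz))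
  have hmaps : ∀ v ∈ T \ Z, σ v ∈ T \ Z := by
    intro v hv
    rw [mem_sdiff] at hv ⊢
    refine ⟨?_, fun h => hv.2 ?_⟩
    · rw [Equiv.swap_apply_def]
      split_ifs
      exacts [(hT i).2, (hT i).1, hv.1]
    · rw [← Equiv.swap_apply_self (a i) (b i) v, hσZ _ h]; exact h
  have hσZ' : Z.image σ = Z := (image_congr hσZ).trans image_id
  have hneg : ∑ v ∈ T \ Z, polytabloid a b (insert v Z) =
      -∑ v ∈ T \ Z, polytabloid a b (insert v Z) := by
    rw [← sum_neg_distrib]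
    refine sum_nbij' σ σ hmaps hmaps (fun v _ => Equiv.swap_apply_self _ _ _)
      (fun v _ => Equiv.swap_apply_self _ _ _) fun v _ => ?_
    have h := polytabloid_swap hab i (insert v Z)
    rw [image_insert, hσZ'] at h
    rw [h, neg_neg]
  omega

end Polytabloid

section Specht

variable {α : Type*} [DecidableEq α] {ι : Type*}

/-- The `M`-valued functions on the `r`-subsets of `T` killed by `sumInsert T`; for `M = ℤ` this is
the Specht module of the partition `(|T| - r, r)`. -/
def specht (r : ℕ) (T : Finset α) (M : Submodule ℤ (ι → ℤ)) :
    Submodule ℤ (Finset α → ι → ℤ) where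
  carrier := {f | (∀ Y, f Y ∈ M) ∧ (∀ Y, ¬(Y ⊆ T ∧ Y.card = r) → f Y = 0) ∧
    ∀ Z : Finset α, Z.card + 1 = r → sumInsert T f Z = 0}
  add_mem' := by
    rintro f g ⟨hfM, hfs, hfc⟩ ⟨hgM, hgs, hgc⟩
    exact ⟨fun Y => M.add_mem (hfM Y) (hgM Y), fun Y hY => by simp [hfs Y hY, hgs Y hY],
      fun Z hZ => by rw [sumInsert_add, hfc Z hZ, hgc Z hZ, add_zero]⟩
  zero_mem' := ⟨fun _ => M.zero_mem, fun _ _ => rfl, fun _ _ => sum_const_zero⟩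
  smul_mem' := by
    rintro n f ⟨hfM, hfs, hfc⟩
    exact ⟨fun Y => M.smul_mem n (hfM Y), fun Y hY => by simp [hfs Y hY],
      fun Z hZ => by rw [sumInsert_smul, hfc Z hZ, smul_zero]⟩

variable {r : ℕ} {T : Finset α} {M : Submodule ℤ (ι → ℤ)}

lemma eq_zero_of_mem_specht (hT : T.card < 2 * r) {f : Finset α → ι → ℤ}
    (hf : f ∈ specht r T M) : f = 0 := by
  obtain ⟨-, hfs, hfc⟩ := hf
  funext Y i
  have h := eq_zero_of_sumInsert_eq_zero hT (f := fun Y => f Y i)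
    (fun Y hY => by rw [hfs Y hY]; rfl)
    (fun Z hZ => by simpa [sumInsert] using congrFun (hfc Z hZ) i)
  exact congrFun h Y

def polytabloids (r : ℕ) (T : Finset α) (M : Submodule ℤ (ι → ℤ)) :
    Set (Finset α → ι → ℤ) :=
  {g | ∃ a b : Fin r → α, Injective (Sum.elim a b) ∧ (∀ i, a i ∈ T ∧ b i ∈ T) ∧
    ∃ c ∈ M, g = fun Y => polytabloid a b Y • c}

lemma polytabloids_subset_specht : polytabloids r T M ⊆ specht r T M := by
  rintro _ ⟨a, b, hab, habT, c, hc, rfl⟩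
  refine ⟨fun Y => M.smul_mem _ hc, fun Y hY => ?_, fun Z hZ => ?_⟩
  · by_cases hp : polytabloid a b Y = 0
    · simp [hp]
    · obtain ⟨χ, rfl⟩ := exists_eq_mixedSet_of_polytabloid_ne_zero hp
      exact absurd ⟨mixedSet_subset habT χ, card_mixedSet hab χ⟩ hY
  · have h := sumInsert_polytabloid hab habT hZ
    rw [sumInsert] at h
    rw [sumInsert, ← sum_smul, h, zero_smul]

lemma polytabloids_mono {T' : Finset α} (h : T ⊆ T') :
    polytabloids r T M ⊆ polytabloids r T' M := by
  rintro _ ⟨a, b, hab, habT, c, hc, rfl⟩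
  exact ⟨a, b, hab, fun i => ⟨h (habT i).1, h (habT i).2⟩, c, hc, rfl⟩

lemma polytabloid_fin_zero (a b : Fin 0 → α) (Y : Finset α) :
    polytabloid a b Y = if Y = ∅ then 1 else 0 := by
  simp [polytabloid, mixedSet, choiceSign]

lemma specht_zero_le_span_polytabloids : specht 0 T M ≤ Submodule.span ℤ (polytabloids 0 T M) := by
  rintro f ⟨hfM, hfs, -⟩
  refine Submodule.subset_span ⟨Fin.elim0, Fin.elim0, injective_of_subsingleton _,
    fun i => i.elim0, f ∅, hfM ∅, funext fun Y => ?_⟩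
  rw [polytabloid_fin_zero]
  split_ifs with hY
  · rw [hY, one_smul]
  · rw [zero_smul]
    exact hfs Y fun h => hY (card_eq_zero.mp h.2)

def link {N : Type*} [Zero N] (t : α) (f : Finset α → N) (Q : Finset α) : N :=
  if t ∈ Q then 0 else f (insert t Q)

lemma link_mem_specht {t : α} (ht : t ∈ T) {f : Finset α → ι → ℤ} (hf : f ∈ specht (r + 1) T M) :
    link t f ∈ specht r (T.erase t) M := by
  obtain ⟨hfM, hfs, hfc⟩ := hf
  refine ⟨fun Q => ?_, fun Q hQ => ?_, fun Z hZ => ?_⟩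
  · unfold link
    split_ifs
    exacts [M.zero_mem, hfM _]
  · unfold link
    split_ifs with htQ
    · rfl
    refine hfs _ fun ⟨hsub, hcard⟩ =>
      hQ ⟨fun q hq => mem_erase.mpr ⟨?_, hsub (mem_insert_of_mem hq)⟩, ?_⟩
    · rintro rfl; exact htQ hq
    · rw [card_insert_of_notMem htQ] at hcard; omega
  · by_cases htZ : t ∈ Z
    · exact sum_eq_zero fun v _ => if_pos (mem_insert_of_mem htZ)
    · rw [← hfc (insert t Z) (by rw [card_insert_of_notMem htZ]; omega), sumInsert, sumInsert,
        sdiff_insert, ← erase_sdiff_comm]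
      refine sum_congr rfl fun v hv => ?_
      have hvt : v ≠ t := ne_of_mem_erase (mem_sdiff.mp hv).1
      rw [link, if_neg (by simp [Ne.symm hvt, htZ]), insert_comm]

lemma mem_specht_erase {t : α} {f : Finset α → ι → ℤ} (hf : f ∈ specht r T M)
    (hft : ∀ Y, t ∈ Y → f Y = 0) : f ∈ specht r (T.erase t) M := by
  obtain ⟨hfM, hfs, hfc⟩ := hf
  refine ⟨hfM, fun Y hY => ?_, fun Z hZ => ?_⟩
  · by_cases htY : t ∈ Y
    · exact hft Y htY
    refine hfs Y fun h => hY ⟨fun y hy => mem_erase.mpr ⟨?_, h.1 hy⟩, h.2⟩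
    rintro rfl; exact htY hy
  · rw [← hfc Z hZ, sumInsert, sumInsert]
    refine sum_subset (sdiff_subset_sdiff (erase_subset _ _) le_rfl) fun v hv hv' => hft _ ?_
    obtain rfl : v = t := by
      by_contra hvt
      exact hv' (mem_sdiff.mpr ⟨mem_erase.mpr ⟨hvt, (mem_sdiff.mp hv).1⟩, (mem_sdiff.mp hv).2⟩)
    exact mem_insert_self _ _

lemma exists_lift_span_polytabloids {t : α} (ht : t ∈ T) (hcard : 2 * r < (T.erase t).card)
    {g : Finset α → ι → ℤ} (hg : g ∈ Submodule.span ℤ (polytabloids r (T.erase t) M)) :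
    ∃ g' ∈ Submodule.span ℤ (polytabloids (r + 1) T M), ∀ Y, t ∈ Y → g' Y = g (Y.erase t) := by
  induction hg using Submodule.span_induction with
  | mem g hg =>
    obtain ⟨a, b, hab, habT, c, hc, rfl⟩ := hg
    obtain ⟨s, hsT, hs⟩ := exists_mem_notMem_of_card_lt_card (s := univ.image (Sum.elim a b))
      (card_image_le.trans_lt (by simpa [two_mul] using hcard))
    have hs' : ∀ i, s ≠ a i ∧ s ≠ b i := fun i =>
      ⟨fun h => hs (mem_image.mpr ⟨.inl i, mem_univ _, h.symm⟩),
        fun h => hs (mem_image.mpr ⟨.inr i, mem_univ _, h.symm⟩)⟩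
    have ht' : ∀ i, t ≠ a i ∧ t ≠ b i := fun i =>
      ⟨fun h => notMem_erase t T (h ▸ (habT i).1), fun h => notMem_erase t T (h ▸ (habT i).2)⟩
    have hts : t ≠ s := fun h => notMem_erase t T (h ▸ hsT)
    refine ⟨fun Y => polytabloid (Fin.cons t a) (Fin.cons s b) Y • c, Submodule.subset_span
      ⟨_, _, injective_sumElim_cons hab ht' hs' hts, fun i => ?_, c, hc, rfl⟩,
      fun Y hY => by simp only [polytabloid_cons ht' hts hY]⟩
    cases i using Fin.cases
    · exact ⟨ht, mem_of_mem_erase hsT⟩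
    · exact ⟨mem_of_mem_erase (habT _).1, mem_of_mem_erase (habT _).2⟩
  | zero => exact ⟨0, zero_mem _, fun _ _ => rfl⟩
  | add g₁ g₂ _ _ h₁ h₂ =>
    obtain ⟨g₁', hg₁, e₁⟩ := h₁
    obtain ⟨g₂', hg₂, e₂⟩ := h₂
    exact ⟨g₁' + g₂', add_mem hg₁ hg₂, fun Y hY => by simp [e₁ Y hY, e₂ Y hY]⟩
  | smul n g _ h =>
    obtain ⟨g', hg', e⟩ := h
    exact ⟨n • g', Submodule.smul_mem _ n hg', fun Y hY => by simp [e Y hY]⟩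

/-- Induction on `T`: the link of `f` at `t ∈ T` is spanned over `T \ {t}`, its polytabloids extend
to ones over `T` agreeing with `f` on the sets through `t`, and the difference lives on
`T \ {t}`. -/
theorem specht_le_span_polytabloids (r : ℕ) (T : Finset α) :
    specht r T M ≤ Submodule.span ℤ (polytabloids r T M) := by
  induction T using Finset.strongInduction generalizing r with
  | H T ih =>
  rcases r with _ | r
  · exact specht_zero_le_span_polytabloids
  intro f hf
  by_cases hsmall : T.card < 2 * (r + 1)
  · rw [eq_zero_of_mem_specht hsmall hf]
    exact zero_mem _
  obtain ⟨t, ht⟩ : T.Nonempty := card_pos.mp (by omega)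
  have hT' : T.erase t ⊂ T := erase_ssubset ht
  obtain ⟨g, hg, hgf⟩ := exists_lift_span_polytabloids ht (by rw [card_erase_of_mem ht]; omega)
    (ih _ hT' r (link_mem_specht ht hf))
  have hrest : f - g ∈ specht (r + 1) (T.erase t) M := by
    refine mem_specht_erase (sub_mem hf (Submodule.span_le.mpr polytabloids_subset_specht hg))
      fun Y hY => ?_
    rw [Pi.sub_apply, hgf Y hY, link, if_neg (notMem_erase _ _), insert_erase hY, sub_self]
  simpa using add_mem hg (Submodule.span_mono (polytabloids_mono (erase_subset t T))
    (ih _ hT' (r + 1) hrest))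

end Specht

lemma exists_perm_eqOn {α : Type*} [Infinite α] {s : Finset α} {g : α → α}
    (hg : Set.InjOn g s) : ∃ π : α ≃ α, ∀ x ∈ s, π x = g x := by
  obtain ⟨π, hπ⟩ := Cardinal.extend_function_of_lt (s := (s : Set α))
    ⟨fun x => g x, fun x y h => Subtype.ext (hg x.2 y.2 h)⟩
    (s.finite_toSet.lt_aleph0.trans_le (Cardinal.aleph0_le_mk α)) ⟨Equiv.refl α⟩
  exact ⟨π, fun x hx => hπ ⟨x, hx⟩⟩

lemma exists_perm_extend {α γ : Type*} [Infinite α] [DecidableEq α] [Fintype γ]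
    {src tgt : γ → α} (hsrc : Injective src) (htgt : Injective tgt) {C W : Finset α}
    (hC : ∀ i, src i ∉ C) (hcard : Fintype.card γ + C.card ≤ W.card) :
    ∃ π : α ≃ α, (∀ i, π (src i) = tgt i) ∧ ∀ x ∈ C, π x ∈ W := by
  have hroom : C.card ≤ (W \ univ.image tgt).card := by
    have := le_card_sdiff (univ.image tgt) W
    have := card_image_le (s := (univ : Finset γ)) (f := tgt)
    rw [card_univ] at this
    omega
  obtain ⟨e, heC, he⟩ := C.finite_toSet.exists_injOn_of_encard_le
    (t := ((W \ univ.image tgt : Finset α) : Set α))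
    (by simpa only [Set.encard_coe_eq_coe_finsetCard, Nat.cast_le] using hroom)
  let g x := if x ∈ C then e x else extend src tgt id x
  have hgC : ∀ x ∈ C, g x ∈ W \ univ.image tgt := fun x hx => by
    simp only [g, if_pos hx]; exact heC hx
  have hgsrc : ∀ i, g (src i) = tgt i := fun i => by
    simp only [g, if_neg (hC i), hsrc.extend_apply]
  have hg : Set.InjOn g ↑(C ∪ univ.image src) := by
    have hsep : ∀ x ∈ C, ∀ i, g x ≠ g (src i) := fun x hx i h =>
      (mem_sdiff.mp (hgC x hx)).2 (h ▸ hgsrc i ▸ mem_image_of_mem _ (mem_univ i))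
    intro x hx y hy hxy
    simp only [coe_union, Set.mem_union, mem_coe, coe_image, coe_univ, Set.image_univ,
      Set.mem_range] at hx hy
    rcases hx with hx | ⟨i, rfl⟩ <;> rcases hy with hy | ⟨j, rfl⟩
    · exact he hx hy (by simpa only [g, if_pos hx, if_pos hy] using hxy)
    · exact absurd hxy (hsep x hx j)
    · exact absurd hxy.symm (hsep y hy i)
    · rw [hgsrc, hgsrc] at hxy
      rw [htgt hxy]
  obtain ⟨π, hπ⟩ := exists_perm_eqOn hg
  refine ⟨π, fun i => ?_, fun x hx => ?_⟩
  · rw [hπ _ (mem_union_right _ (mem_image_of_mem _ (mem_univ i))), hgsrc]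
  · rw [hπ _ (mem_union_left _ hx)]
    exact (mem_sdiff.mp (hgC x hx)).1

section Hypergraph

variable {d : ℕ}

lemma weight_eq_sum (X : Finset ℕ) (H : HG d) :
    weight X H = H.sum fun e w => if X ⊆ e then w else 0 := by
  rw [weight, sum_filter]
  rfl

lemma weight_add (X : Finset ℕ) (H G : HG d) : weight X (H + G) = weight X H + weight X G := by
  simp only [weight_eq_sum]
  exact Finsupp.sum_add_index' (fun _ => by simp) fun _ _ _ => by split_ifs <;> simp

lemma mem_verts {H : HG d} {x : ℕ} : x ∈ verts H ↔ ∃ e ∈ H.support, x ∈ e := by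
  simp [verts, mem_sup]

lemma weight_eq_zero_of_not_subset {X : Finset ℕ} {H : HG d} (h : ¬X ⊆ verts H) :
    weight X H = 0 :=
  sum_eq_zero fun e he =>
    absurd ((mem_filter.mp he).2.trans fun _ hx => mem_verts.mpr ⟨e, (mem_filter.mp he).1, hx⟩) h

lemma IsIsolated.weight_eq_zero {m : ℕ} {H : HG d} (h : IsIsolated m H) {X : Finset ℕ}
    (hX : X.card ≤ m) : weight X H = 0 := by
  by_cases hXH : X ⊆ verts H
  exacts [h X hXH hX, weight_eq_zero_of_not_subset hXH]

lemma IsIsolated.preIsolated {m : ℕ} {H : HG d} (h : IsIsolated m H) : PreIsolated m H :=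
  ⟨fun X hX hXm => h X hX (hXm.trans (Nat.sub_le m 1)), ∅, empty_subset _, by simp,
    fun _ _ hY _ => h.weight_eq_zero hY.le⟩

def weightsUpTo (r : ℕ) : HG d →+ (Finset ℕ → Fin d → ℤ) where
  toFun G Y := if Y.card ≤ r then weight Y G else 0
  map_zero' := by ext; simp [weight]
  map_add' G G' := by ext Y : 1; split_ifs <;> simp [weight_add, *]

lemma weightsUpTo_apply {r : ℕ} {G : HG d} {Y : Finset ℕ} :
    weightsUpTo r G Y = if Y.card ≤ r then weight Y G else 0 := rfl

lemma isIsolated_of_weightsUpTo_eq_zero {r : ℕ} {G : HG d} (h : weightsUpTo r G = 0) :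
    IsIsolated r G :=
  fun X _ hX => by simpa [weightsUpTo_apply, hX] using congrFun h X

lemma sumInsert_weight {k : ℕ} {H : HG d} (hH : IsHG k H) {W : Finset ℕ} (hW : verts H ⊆ W)
    (Z : Finset ℕ) : sumInsert W (fun Y => weight Y H) Z = (k - Z.card) • weight Z H := by
  simp only [sumInsert, weight_eq_sum, Finsupp.sum]
  rw [sum_comm, smul_sum]
  refine sum_congr rfl fun e he => ?_
  simp_rw [insert_subset_iff]
  by_cases hZe : Z ⊆ e
  · have hsets : (W \ Z).filter (· ∈ e) = e \ Z := by
      ext v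
      simp only [mem_filter, mem_sdiff]
      exact ⟨fun h => ⟨h.2, h.1.2⟩, fun h => ⟨⟨hW (mem_verts.mpr ⟨e, he, h.1⟩), h.2⟩, h.1⟩⟩
    simp only [hZe, and_true, if_true]
    rw [← sum_filter, hsets, sum_const, card_sdiff_of_subset hZe, hH e he]
  · simp [hZe]

lemma weightsUpTo_mem_specht {k m : ℕ} {H : HG d} (hH : IsHG k H) (hiso : IsIsolated m H)
    {W : Finset ℕ} (hW : verts H ⊆ W) {M : Submodule ℤ (Fin d → ℤ)}
    (hM : ∀ X : Finset ℕ, X.card = m + 1 → weight X H ∈ M) :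
    weightsUpTo (m + 1) H ∈ specht (m + 1) W M := by
  refine ⟨fun Y => ?_, fun Y hY => ?_, fun Z hZ => ?_⟩
  · rw [weightsUpTo_apply]
    split_ifs with hY
    · rcases hY.lt_or_eq with hY | hY
      · rw [hiso.weight_eq_zero (by omega)]; exact M.zero_mem
      · exact hM Y hY
    · exact M.zero_mem
  · rw [weightsUpTo_apply]
    split_ifs with hYm
    · by_cases hYH : Y ⊆ verts H
      · rcases hYm.lt_or_eq with hlt | heq
        · exact hiso.weight_eq_zero (by omega)
        · exact absurd ⟨hYH.trans hW, heq⟩ hY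
      · exact weight_eq_zero_of_not_subset hYH
    · rfl
  · have h := sumInsert_weight hH hW Z
    rw [hiso.weight_eq_zero (by omega), smul_zero] at h
    rw [← h]
    refine sum_congr rfl fun v hv => ?_
    rw [weightsUpTo_apply, if_pos (by rw [card_insert_of_notMem (mem_sdiff.mp hv).2]; omega)]

lemma IsSimple.exists_polytabloid {k r : ℕ} {c : Fin d → ℤ} {G : HG d} (hG : IsSimple k r c G) :
    ∃ (α β : Fin r → ℕ) (C : Finset ℕ), Injective (Sum.elim α β) ∧
      (∀ j, Sum.elim α β j ∉ C) ∧ C.card = 2 * (k - r) - 1 ∧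
      verts G ⊆ univ.image (Sum.elim α β) ∪ C ∧
      weightsUpTo r G = fun Y => polytabloid α β Y • c := by
  obtain ⟨A, B, C, α, β, hα, hβ, rfl, rfl, hAB, hAC, hBC, hCcard, hV, hmixed, hother, hlow⟩ := hG
  have hAB' : univ.image α ∪ univ.image β = univ.image (Sum.elim α β) := by
    ext x; simp [Sum.exists]
  have hαβ : Injective (Sum.elim α β) := hα.sumElim hβ fun i j h =>
    disjoint_left.mp hAB (mem_image_of_mem α (mem_univ i)) (h ▸ mem_image_of_mem β (mem_univ j))
  refine ⟨α, β, C, hαβ, ?_, hCcard, hAB' ▸ hV, funext fun Y => ?_⟩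
  · rintro (i | i) h
    exacts [disjoint_left.mp hAC (mem_image_of_mem _ (mem_univ i)) h,
      disjoint_left.mp hBC (mem_image_of_mem _ (mem_univ i)) h]
  rw [weightsUpTo_apply]
  by_cases hmix : ∃ χ, Y = mixedSet α β χ
  · obtain ⟨χ, rfl⟩ := hmix
    rw [if_pos (card_mixedSet hαβ χ).le, polytabloid_mixedSet hαβ]
    exact hmixed χ
  have hp : polytabloid α β Y = 0 :=
    by_contra fun h => hmix (exists_eq_mixedSet_of_polytabloid_ne_zero h)
  rw [hp, zero_smul]
  split_ifs with hY
  · by_cases hYG : Y ⊆ verts G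
    · rcases hY.lt_or_eq with hlt | heq
      · exact hlow Y (hYG.trans hV) hlt
      · exact hother Y (hYG.trans hV) heq fun χ h => hmix ⟨χ, h⟩
    · exact weight_eq_zero_of_not_subset hYG
  · rfl

def rename (π : ℕ ≃ ℕ) (H : HG d) : HG d := H.equivMapDomain π.finsetCongr

lemma rename_apply (π : ℕ ≃ ℕ) (H : HG d) (e : Finset ℕ) :
    rename π H e = H (e.image π.symm) := by
  simp [rename, Finsupp.equivMapDomain_apply, map_eq_image]

lemma hgEquiv_rename (π : ℕ ≃ ℕ) (H : HG d) : HGEquiv H (rename π H) :=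
  ⟨π, fun e => by rw [rename_apply, image_image, π.symm_comp_self, image_id]⟩

lemma weight_rename (π : ℕ ≃ ℕ) (H : HG d) (Y : Finset ℕ) :
    weight Y (rename π H) = weight (Y.image π.symm) H := by
  simp only [weight_eq_sum, rename, Finsupp.sum_equivMapDomain, Equiv.finsetCongr_apply,
    map_eq_image, Equiv.coe_toEmbedding]
  refine Finsupp.sum_congr fun e _ => if_congr ?_ rfl rfl
  rw [← image_subset_image_iff π.symm.injective, image_image, π.symm_comp_self, image_id]

lemma verts_rename_subset {π : ℕ ≃ ℕ} {H : HG d} {W : Finset ℕ} (hW : ∀ x ∈ verts H, π x ∈ W) :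
    verts (rename π H) ⊆ W := by
  intro x hx
  obtain ⟨e, he, hxe⟩ := mem_verts.mp hx
  rw [Finsupp.mem_support_iff, rename_apply] at he
  simpa using hW (π.symm x)
    (mem_verts.mpr ⟨_, Finsupp.mem_support_iff.mpr he, mem_image_of_mem _ hxe⟩)

lemma weightsUpTo_rename (r : ℕ) (π : ℕ ≃ ℕ) (G : HG d) (Y : Finset ℕ) :
    weightsUpTo r (rename π G) Y = weightsUpTo r G (Y.image π.symm) := by
  rw [weightsUpTo_apply, weightsUpTo_apply, weight_rename,
    card_image_of_injective _ π.symm.injective]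

/-- The `2(k - r) - 1` vertices of `G` outside its two prescribed tuples fit into `W` beside the
`2r` new ones. -/
lemma IsSimple.exists_rename {k r : ℕ} (hr : r ≤ k) {c : Fin d → ℤ} {G : HG d}
    (hG : IsSimple k r c G) {W : Finset ℕ} (hW : 2 * k ≤ W.card) {a b : Fin r → ℕ}
    (hab : Injective (Sum.elim a b)) (habW : ∀ i, a i ∈ W ∧ b i ∈ W) :
    ∃ π : ℕ ≃ ℕ, verts (rename π G) ⊆ W ∧
      weightsUpTo r (rename π G) = fun Y => polytabloid a b Y • c := by
  obtain ⟨α, β, C, hαβ, hC, hCcard, hV, hw⟩ := hG.exists_polytabloid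
  obtain ⟨π, hπ, hπC⟩ := exists_perm_extend hαβ hab hC (W := W)
    (by simp only [Fintype.card_sum, Fintype.card_fin]; omega)
  have hπα : π ∘ α = a := funext fun i => hπ (.inl i)
  have hπβ : π ∘ β = b := funext fun i => hπ (.inr i)
  refine ⟨π, verts_rename_subset fun x hx => ?_, funext fun Y => ?_⟩
  · rcases mem_union.mp (hV hx) with h | h
    · obtain ⟨j, -, rfl⟩ := mem_image.mp h
      rw [hπ j]
      rcases j with i | i
      exacts [(habW i).1, (habW i).2]
    · exact hπC x h
  · rw [weightsUpTo_rename, hw, ← hπα, ← hπβ]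
    beta_reduce
    rw [← polytabloid_image π.injective α β, image_image, π.self_comp_symm, image_id]

lemma polytabloids_subset_image_weightsUpTo {k r : ℕ} (hr : r ≤ k) {S : Set (HG d)}
    {M : Submodule ℤ (Fin d → ℤ)} (hS : ∀ c ∈ M, ∃ G ∈ S, IsSimple k r c G) {W : Finset ℕ}
    (hW : 2 * k ≤ W.card) :
    polytabloids r W M ⊆ weightsUpTo r '' {F | F ∈ Eqs S ∧ verts F ⊆ W} := by
  rintro _ ⟨a, b, hab, habW, c, hc, rfl⟩
  obtain ⟨G, hGS, hG⟩ := hS c hc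
  obtain ⟨π, hπW, hπ⟩ := hG.exists_rename hr hW hab habW
  exact ⟨rename π G, ⟨⟨G, hGS, hgEquiv_rename π G⟩, hπW⟩, hπ⟩

lemma mem_zsum_of_mem_span {𝒢 : Set (HG d)} {H : HG d} (h : H ∈ Submodule.span ℤ 𝒢) :
    H ∈ Zsum 𝒢 := by
  obtain ⟨n, c, F, rfl⟩ := Submodule.mem_span_set'.mp h
  exact ⟨n, c, fun i => F i, fun i => (F i).2, rfl⟩

lemma supports_of_mem_span {V : Finset ℕ} {𝓗 : Set (HG d)} {G : HG d}
    (h : G ∈ Submodule.span ℤ {F | F ∈ Eqs 𝓗 ∧ verts F ⊆ V}) : Supports V G 𝓗 := by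
  obtain ⟨n, c, F, rfl⟩ := Submodule.mem_span_set'.mp h
  exact ⟨n, c, fun i => F i, fun i => (F i).2.1, fun i => (F i).2.2, rfl⟩

end Hypergraph

theorem isolating_a_level_general
    (k d m : ℕ) (hm : m < k)
    (H : HG d) (hH : IsHG k H) (hiso : IsIsolated m H)
    (V : Finset ℕ) (hV : verts H ⊆ V)
    (S : Set (HG d)) (hS : SimpleFor k S {H}) :
    ∃ G ∈ Zsum (Eqs S),
      PreIsolated (m + 1) (H + G) ∧ (2 * k - 1 < V.card → Supports V G S) := by
  obtain ⟨W, hVW, hW⟩ := Infinite.exists_superset_card_eq V (max V.card (2 * k)) (le_max_left _ _)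
  set M : Submodule ℤ (Fin d → ℤ) := Submodule.span ℤ {w | ∃ G ∈ ({H} : Set (HG d)),
    ∃ X : Finset ℕ, X ⊆ verts G ∧ X.card = m + 1 ∧ w = weight X G}
  have hspecht : weightsUpTo (m + 1) H ∈ specht (m + 1) W M :=
    weightsUpTo_mem_specht hH hiso (hV.trans hVW) fun X hX => by
      by_cases hXH : X ⊆ verts H
      · exact Submodule.subset_span ⟨H, rfl, X, hXH, hX, rfl⟩
      · rw [weight_eq_zero_of_not_subset hXH]; exact M.zero_mem
  obtain ⟨G, hG, hGH⟩ : weightsUpTo (m + 1) H ∈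
      (Submodule.span ℤ {F | F ∈ Eqs S ∧ verts F ⊆ W}).map
        (weightsUpTo (m + 1)).toIntLinearMap := by
    rw [Submodule.map_span]
    exact Submodule.span_mono (polytabloids_subset_image_weightsUpTo hm (hS.2 (m + 1) hm)
      (by omega)) (specht_le_span_polytabloids _ _ hspecht)
  refine ⟨-G, mem_zsum_of_mem_span (neg_mem (Submodule.span_mono (fun F hF => hF.1) hG)),
    (isIsolated_of_weightsUpTo_eq_zero ?_).preIsolated, fun hVk => ?_⟩
  · have hGH' : weightsUpTo (m + 1) G = weightsUpTo (m + 1) H := hGH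
    rw [map_add, map_neg, hGH', add_neg_cancel]
  · obtain rfl : W = V := eq_of_superset_of_card_ge hVW (by omega)
    exact supports_of_mem_span (neg_mem hG)

/-- **Lemma (isolating the next level).**
Let `H = (V, μ)` be an `m`-isolated `k`-hypergraph of dimension `d` with
`m < k`, and let `S` be a family of `k`-hypergraphs of dimension `d` that is
simple for `{H}`.  Then there is a hypergraph `G ∈ Σ_ℤ(Eqs(S))` such that
`H + G` is pre `(m+1)`-isolated; moreover, if `|V| > 2k − 1`, then `V`
supports `G` for the family `S`. -/
theorem isolating_a_level
    (k d m : ℕ) (hk : 1 ≤ k) (hd : 1 ≤ d) (hm : m < k)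
    (H : HG d) (hH : IsHG k H) (hiso : IsIsolated m H)
    (V : Finset ℕ) (hV : verts H ⊆ V)
    (S : Set (HG d)) (hSk : ∀ F ∈ S, IsHG k F) (hS : SimpleFor k S {H}) :
    ∃ G ∈ Zsum (Eqs S),
      PreIsolated (m + 1) (H + G) ∧ (2 * k - 1 < V.card → Supports V G S) :=
  isolating_a_level_general k d m hm H hH hiso V hV S hS
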